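/- Let ψ₁,…,ψ_m be unit vectors spanning ℂ^d, with priors p_k > 0, Σ p_k = 1, and let (M_k) be an optimal POVM on ℂ^d, i.e. one maximizing Σ_k p_k ⟨ψ_k, N_k ψ_k⟩ over all POVMs (N_k). Define the weights W_k := p_k² ⟨ψ_k, M_k ψ_k⟩. Then S := Σ_ℓ W_ℓ |ψ_ℓ⟩⟨ψ_ℓ| is positive definite on ℂ^d, and M_k = S^{-1/2} W_k |ψ_k⟩⟨ψ_k| S^{-1/2} for every k; in particular every optimal POVM is a Belavkin weighted square-root measurement (and each M_k has rank at most 1). -/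

import Mathlib

open Matrix Filter
open scoped ComplexOrder

noncomputable section

/-- The rank-one projector `|ψ⟩⟨ψ|` as a matrix. -/
def proj {d : ℕ} (ψ : Fin d → ℂ) : Matrix (Fin d) (Fin d) ℂ := vecMulVec ψ (star ψ)

/-- The (real) expectation value `⟨ψ, M ψ⟩`. -/
def expVal {d : ℕ} (M : Matrix (Fin d) (Fin d) ℂ) (ψ : Fin d → ℂ) : ℝ :=
  (star ψ ⬝ᵥ M *ᵥ ψ).re

/-- A POVM: a finite family of PSD matrices summing to the identity. -/
def IsPOVM {d m : ℕ} (M : Fin m → Matrix (Fin d) (Fin d) ℂ) : Prop :=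
  (∀ k, (M k).PosSemidef) ∧ ∑ k, M k = 1

/-- The square root of a positive semidefinite matrix, as defined in the older Mathlib
(`Matrix.PosSemidef.sqrt`, since removed): `U * diagonal (√ eigenvalues) * U⋆`. -/
def Matrix.PosSemidef.sqrt {n : Type*} [Fintype n] [DecidableEq n] {𝕜 : Type*} [RCLike 𝕜]
    {A : Matrix n n 𝕜} (hA : A.PosSemidef) : Matrix n n 𝕜 :=
  hA.1.eigenvectorUnitary.1 * diagonal ((↑) ∘ (√·) ∘ hA.1.eigenvalues) *
  (star hA.1.eigenvectorUnitary : Matrix n n 𝕜)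

/-!
Optimality of `M` against the perturbations `M j ↦ (1 - ε X) M j (1 - ε X)`, the freed weight
`1 - (1 - ε X)²` going to a fixed outcome `k`, with `X = |φ⟩⟨φ|`, gives to first order in `ε`
Holevo's condition `Γ + Γᴴ ≥ 2 p k |ψ k⟩⟨ψ k|` for the Lagrange operator
`Γ = ∑ j, p j |ψ j⟩⟨ψ j| M j`. Since `∑ k, (Γ + Γᴴ - 2 p k |ψ k⟩⟨ψ k|) M k = Γᴴ - Γ` has trace
with zero real part while each summand has nonnegative trace, every summand vanishes; hence `Γ`
is Hermitian and `Γ M k = p k |ψ k⟩⟨ψ k| M k`. Then `Γ ≥ p k |ψ k⟩⟨ψ k|` for all `k` makes `Γ`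
positive definite when the `ψ k` span, `Γ M k Γ = W k |ψ k⟩⟨ψ k|`, and summing over `k` gives
`Γ² = S`. So `Γ = S^{1/2}` and `M k = S^{-1/2} (W k |ψ k⟩⟨ψ k|) S^{-1/2}`.
-/

namespace Matrix

variable {n : Type*} [Fintype n] {𝕜 : Type*} [RCLike 𝕜]

open scoped MatrixOrder in
theorem PosSemidef.exists_eq_conjTranspose_mul_self [DecidableEq n] {A : Matrix n n 𝕜}
    (hA : A.PosSemidef) : ∃ C : Matrix n n 𝕜, A = Cᴴ * C :=
  CStarAlgebra.nonneg_iff_eq_star_mul_self.mp hA.nonneg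

theorem trace_conjTranspose_mul_self_mul_conjTranspose_mul_self (C D : Matrix n n 𝕜) :
    (Cᴴ * C * (Dᴴ * D)).trace = ((D * Cᴴ)ᴴ * (D * Cᴴ)).trace := by
  rw [conjTranspose_mul, conjTranspose_conjTranspose, ← trace_mul_cycle]
  simp only [mul_assoc]

theorem PosSemidef.trace_mul_nonneg {A B : Matrix n n 𝕜} (hA : A.PosSemidef)
    (hB : B.PosSemidef) : 0 ≤ (A * B).trace := by
  classical
  obtain ⟨C, rfl⟩ := hA.exists_eq_conjTranspose_mul_self
  obtain ⟨D, rfl⟩ := hB.exists_eq_conjTranspose_mul_self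
  rw [trace_conjTranspose_mul_self_mul_conjTranspose_mul_self]
  exact (posSemidef_conjTranspose_mul_self _).trace_nonneg

theorem PosSemidef.mul_eq_zero_of_trace_mul_eq_zero {A B : Matrix n n 𝕜} (hA : A.PosSemidef)
    (hB : B.PosSemidef) (h : (A * B).trace = 0) : A * B = 0 := by
  classical
  obtain ⟨C, rfl⟩ := hA.exists_eq_conjTranspose_mul_self
  obtain ⟨D, rfl⟩ := hB.exists_eq_conjTranspose_mul_self
  rw [trace_conjTranspose_mul_self_mul_conjTranspose_mul_self,
    trace_conjTranspose_mul_self_eq_zero_iff] at h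
  calc Cᴴ * C * (Dᴴ * D) = Cᴴ * (D * Cᴴ)ᴴ * D := by simp only [conjTranspose_mul,
        conjTranspose_conjTranspose, mul_assoc]
    _ = 0 := by rw [h, conjTranspose_zero, mul_zero, zero_mul]

theorem PosSemidef.mul_eq_zero_of_re_trace_sum_nonpos {ι : Type*} [Fintype ι]
    {A B : ι → Matrix n n 𝕜} (hA : ∀ i, (A i).PosSemidef) (hB : ∀ i, (B i).PosSemidef)
    (h : RCLike.re (∑ i, (A i * B i).trace) ≤ 0) (i : ι) : A i * B i = 0 := by
  have hnonneg i := RCLike.nonneg_iff.mp ((hA i).trace_mul_nonneg (hB i))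
  rw [map_sum] at h
  have hre := (Finset.sum_eq_zero_iff_of_nonneg fun i _ => (hnonneg i).1).mp
    (le_antisymm h (Finset.sum_nonneg fun i _ => (hnonneg i).1)) i (Finset.mem_univ i)
  exact (hA i).mul_eq_zero_of_trace_mul_eq_zero (hB i) (RCLike.ext (by simpa using hre)
    (by simpa using (hnonneg i).2))

open scoped MatrixOrder in
theorem PosSemidef.sqrt_eq_of_mul_self_eq [DecidableEq n] {A B : Matrix n n 𝕜}
    (hA : A.PosSemidef) (hB : B.PosSemidef) (h : B * B = A) : hA.sqrt = B := by
  have e : hA.sqrt = CFC.sqrt A := by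
    rw [CFC.sqrt_eq_real_sqrt A hA.nonneg, cfcₙ_eq_cfc, hA.1.cfc_eq]
    simp [IsHermitian.cfc, Unitary.conjStarAlgAut_apply, Matrix.PosSemidef.sqrt]
  rw [e, CFC.sqrt_eq_iff A B hA.nonneg hB.nonneg, h]

theorem exists_star_dotProduct_ne_zero_of_span_eq_top {ι : Type*} {v : ι → n → 𝕜}
    (hv : Submodule.span 𝕜 (Set.range v) = ⊤) {x : n → 𝕜} (hx : x ≠ 0) :
    ∃ i, star (v i) ⬝ᵥ x ≠ 0 := by
  by_contra! h
  have hzero : dotProductBilin 𝕜 𝕜 (star x) = 0 :=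
    LinearMap.ext_on_range hv fun i => by simp [star_dotProduct x (v i), h i]
  exact hx (dotProduct_star_self_eq_zero.mp (by simpa using congr($hzero x)))

end Matrix

theorem nonpos_of_forall_mul_add_sq_mul_nonpos {a b δ : ℝ} (hδ : 0 < δ)
    (h : ∀ ε, 0 < ε → ε < δ → ε * a + ε ^ 2 * b ≤ 0) : a ≤ 0 := by
  have hlim : Tendsto (fun ε : ℝ => a + ε * b) (nhdsWithin 0 (Set.Ioi 0)) (nhds a) := by
    refine tendsto_nhdsWithin_of_tendsto_nhds ?_
    simpa using ((continuous_mul_const b).tendsto 0).const_add a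
  refine le_of_tendsto hlim ?_
  filter_upwards [Ioo_mem_nhdsGT hδ] with ε ⟨hε, hεδ⟩
  nlinarith [h ε hε hεδ]

section Projector

variable {d : ℕ}

theorem proj_mulVec (ψ x : Fin d → ℂ) : proj ψ *ᵥ x = (star ψ ⬝ᵥ x) • ψ := by
  simp [proj, vecMulVec_mulVec]

theorem posSemidef_proj (ψ : Fin d → ℂ) : (proj ψ).PosSemidef :=
  posSemidef_vecMulVec_self_star ψ

theorem isHermitian_proj (ψ : Fin d → ℂ) : (proj ψ).IsHermitian :=
  (posSemidef_proj ψ).1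

theorem rank_smul_proj_le_one (r : ℝ) (ψ : Fin d → ℂ) : (r • proj ψ).rank ≤ 1 := by
  rw [proj, ← smul_vecMulVec]
  exact rank_vecMulVec_le _ _

theorem expVal_eq_re_trace (B : Matrix (Fin d) (Fin d) ℂ) (ψ : Fin d → ℂ) :
    expVal B ψ = (proj ψ * B).trace.re := by
  rw [expVal, proj, vecMulVec_mul, trace_vecMulVec, dotProduct_comm ψ, ← dotProduct_mulVec]

theorem expVal_proj_mul (φ ψ : Fin d → ℂ) (B : Matrix (Fin d) (Fin d) ℂ) :
    expVal (proj φ * B) ψ = expVal (B * proj ψ) φ := by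
  rw [expVal_eq_re_trace, expVal_eq_re_trace, trace_mul_comm (proj ψ), mul_assoc]

theorem expVal_proj_comm (φ ψ : Fin d → ℂ) : expVal (proj φ) ψ = expVal (proj ψ) φ := by
  simpa using expVal_proj_mul φ ψ 1

theorem expVal_proj (ψ x : Fin d → ℂ) : expVal (proj ψ) x = Complex.normSq (star ψ ⬝ᵥ x) := by
  rw [expVal, proj_mulVec, dotProduct_smul, smul_eq_mul, star_dotProduct x ψ,
    Complex.star_def, Complex.mul_conj, Complex.ofReal_re]

theorem expVal_add (A B : Matrix (Fin d) (Fin d) ℂ) (ψ : Fin d → ℂ) :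
    expVal (A + B) ψ = expVal A ψ + expVal B ψ := by
  simp [expVal, add_mulVec]

theorem expVal_sub (A B : Matrix (Fin d) (Fin d) ℂ) (ψ : Fin d → ℂ) :
    expVal (A - B) ψ = expVal A ψ - expVal B ψ := by
  simp [expVal, sub_mulVec]

theorem expVal_smul (r : ℝ) (B : Matrix (Fin d) (Fin d) ℂ) (ψ : Fin d → ℂ) :
    expVal (r • B) ψ = r * expVal B ψ := by
  simp [expVal, smul_mulVec]

theorem expVal_sum {ι : Type*} (s : Finset ι) (B : ι → Matrix (Fin d) (Fin d) ℂ)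
    (ψ : Fin d → ℂ) : expVal (∑ i ∈ s, B i) ψ = ∑ i ∈ s, expVal (B i) ψ := by
  simp [expVal, sum_mulVec, dotProduct_sum]

theorem Matrix.IsHermitian.ofReal_expVal {B : Matrix (Fin d) (Fin d) ℂ} (hB : B.IsHermitian)
    (ψ : Fin d → ℂ) : (expVal B ψ : ℂ) = star ψ ⬝ᵥ B *ᵥ ψ :=
  Complex.ext rfl (hB.im_star_dotProduct_mulVec_self ψ).symm

theorem Matrix.IsHermitian.proj_mul_mul_proj {B : Matrix (Fin d) (Fin d) ℂ}
    (hB : B.IsHermitian) (ψ : Fin d → ℂ) : proj ψ * B * proj ψ = expVal B ψ • proj ψ := by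
  rw [proj, vecMulVec_mul, vecMulVec_mul_vecMulVec, vecMulVec_smul, ← dotProduct_mulVec,
    ← hB.ofReal_expVal, ← Complex.coe_smul]

theorem Matrix.IsHermitian.posSemidef_of_expVal_nonneg {B : Matrix (Fin d) (Fin d) ℂ}
    (hB : B.IsHermitian) (h : ∀ x, 0 ≤ expVal B x) : B.PosSemidef :=
  .of_dotProduct_mulVec_nonneg hB fun x => by
    rw [← hB.ofReal_expVal]; exact Complex.zero_le_real.mpr (h x)

theorem Matrix.IsHermitian.posDef_of_expVal_pos {B : Matrix (Fin d) (Fin d) ℂ}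
    (hB : B.IsHermitian) (h : ∀ x, x ≠ 0 → 0 < expVal B x) : B.PosDef :=
  .of_dotProduct_mulVec_pos hB fun x hx => by
    rw [← hB.ofReal_expVal]; exact Complex.zero_lt_real.mpr (h x hx)

end Projector

section POVM

variable {d m : ℕ}

theorem IsPOVM.conj_add_single {M : Fin m → Matrix (Fin d) (Fin d) ℂ} (hM : IsPOVM M)
    {A : Matrix (Fin d) (Fin d) ℂ} (hA : A.IsHermitian) (hA1 : (1 - A * A).PosSemidef)
    (k : Fin m) : IsPOVM ((fun j => A * M j * A) + Pi.single k (1 - A * A)) := by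
  refine ⟨fun j => ?_, ?_⟩
  · refine .add (by simpa [hA.eq] using (hM.1 j).conjTranspose_mul_mul_same A) ?_
    rcases eq_or_ne j k with rfl | hj
    · simpa using hA1
    · simpa [hj] using PosSemidef.zero
  · simp only [Pi.add_apply, Finset.sum_add_distrib]
    rw [← Finset.sum_mul, ← Finset.mul_sum, hM.2, Finset.sum_pi_single']
    simp

def firstVariation (M : Fin m → Matrix (Fin d) (Fin d) ℂ) (k : Fin m)
    (X : Matrix (Fin d) (Fin d) ℂ) : Fin m → Matrix (Fin d) (Fin d) ℂ :=
  Pi.single k ((2 : ℝ) • X) - fun j => X * M j + M j * X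

def secondVariation (M : Fin m → Matrix (Fin d) (Fin d) ℂ) (k : Fin m)
    (X : Matrix (Fin d) (Fin d) ℂ) : Fin m → Matrix (Fin d) (Fin d) ℂ :=
  (fun j => X * M j * X) - Pi.single k (X * X)

theorem conj_add_single_eq_add_variations (M : Fin m → Matrix (Fin d) (Fin d) ℂ) (k : Fin m)
    (X : Matrix (Fin d) (Fin d) ℂ) (ε : ℝ) :
    (fun j => (1 - ε • X) * M j * (1 - ε • X)) + Pi.single k (1 - (1 - ε • X) * (1 - ε • X))
      = M + ε • firstVariation M k X + ε ^ 2 • secondVariation M k X := by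
  funext j
  rcases eq_or_ne j k with rfl | hj <;>
    simp only [firstVariation, secondVariation, Pi.add_apply, Pi.smul_apply, Pi.sub_apply,
      Pi.single_eq_same, Pi.single_eq_of_ne, sub_mul, mul_sub, one_mul, mul_one, smul_mul_assoc,
      mul_smul_comm, ne_eq, not_false_eq_true, *] <;>
    module

theorem isPOVM_add_variations_proj {M : Fin m → Matrix (Fin d) (Fin d) ℂ} (hM : IsPOVM M)
    (k : Fin m) (φ : Fin d → ℂ) {ε : ℝ} (hε : 0 ≤ ε) (hεφ : ε * expVal 1 φ ≤ 2) :
    IsPOVM (M + ε • firstVariation M k (proj φ) + ε ^ 2 • secondVariation M k (proj φ)) := by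
  have hsq : 1 - (1 - ε • proj φ) * (1 - ε • proj φ) = (ε * (2 - ε * expVal 1 φ)) • proj φ := by
    have h : proj φ * proj φ = expVal 1 φ • proj φ := by
      simpa using (isHermitian_one (n := Fin d) (α := ℂ)).proj_mul_mul_proj φ
    simp only [sub_mul, mul_sub, one_mul, mul_one, smul_mul_assoc, mul_smul_comm, smul_smul, h]
    module
  rw [← conj_add_single_eq_add_variations]
  refine hM.conj_add_single ((isHermitian_one.sub ((isHermitian_proj φ).smul (.all ε)))) ?_ k
  rw [hsq]
  exact (posSemidef_proj φ).smul (mul_nonneg hε (by linarith))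

end POVM

section Optimality

variable {d m : ℕ} (ψ : Fin m → Fin d → ℂ) (p : Fin m → ℝ)

def successProb (N : Fin m → Matrix (Fin d) (Fin d) ℂ) : ℝ :=
  ∑ k, p k * expVal (N k) (ψ k)

theorem successProb_add (N N' : Fin m → Matrix (Fin d) (Fin d) ℂ) :
    successProb ψ p (N + N') = successProb ψ p N + successProb ψ p N' := by
  simp [successProb, expVal_add, mul_add, Finset.sum_add_distrib]

theorem successProb_smul (r : ℝ) (N : Fin m → Matrix (Fin d) (Fin d) ℂ) :
    successProb ψ p (r • N) = r * successProb ψ p N := by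
  simp [successProb, expVal_smul, Finset.mul_sum, mul_left_comm]

theorem successProb_sub (N N' : Fin m → Matrix (Fin d) (Fin d) ℂ) :
    successProb ψ p (N - N') = successProb ψ p N - successProb ψ p N' := by
  simp [successProb, expVal_sub, mul_sub, Finset.sum_sub_distrib]

theorem successProb_single (k : Fin m) (X : Matrix (Fin d) (Fin d) ℂ) :
    successProb ψ p (Pi.single k X) = p k * expVal X (ψ k) := by
  rw [successProb, Finset.sum_eq_single k (fun j _ hj => by simp [hj, expVal]) (by simp)]
  simp

variable {ψ p} {M : Fin m → Matrix (Fin d) (Fin d) ℂ}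

theorem successProb_nonpos_of_isPOVM_add_smul_add_sq_smul
    (hopt : ∀ N, IsPOVM N → successProb ψ p N ≤ successProb ψ p M)
    {D₁ D₂ : Fin m → Matrix (Fin d) (Fin d) ℂ} {δ : ℝ} (hδ : 0 < δ)
    (hD : ∀ ε, 0 < ε → ε < δ → IsPOVM (M + ε • D₁ + ε ^ 2 • D₂)) :
    successProb ψ p D₁ ≤ 0 := by
  refine nonpos_of_forall_mul_add_sq_mul_nonpos (b := successProb ψ p D₂) hδ fun ε hε hεδ => ?_
  have := hopt _ (hD ε hε hεδ)
  rw [successProb_add, successProb_add, successProb_smul, successProb_smul] at this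
  linarith

end Optimality

section Lagrange

variable {d m : ℕ} (ψ : Fin m → Fin d → ℂ) (p : Fin m → ℝ) (M : Fin m → Matrix (Fin d) (Fin d) ℂ)

def lagrangeOp : Matrix (Fin d) (Fin d) ℂ :=
  ∑ j, p j • (proj (ψ j) * M j)

theorem conjTranspose_lagrangeOp (hM : ∀ k, (M k).IsHermitian) :
    (lagrangeOp ψ p M)ᴴ = ∑ j, p j • (M j * proj (ψ j)) := by
  simp [lagrangeOp, conjTranspose_sum, (hM _).eq, (isHermitian_proj _).eq]

theorem successProb_firstVariation_proj (hM : ∀ k, (M k).IsHermitian) (k : Fin m)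
    (φ : Fin d → ℂ) : successProb ψ p (firstVariation M k (proj φ))
      = 2 * p k * expVal (proj (ψ k)) φ - expVal (lagrangeOp ψ p M + (lagrangeOp ψ p M)ᴴ) φ := by
  rw [firstVariation, successProb_sub, successProb_single, expVal_smul, expVal_proj_comm,
    conjTranspose_lagrangeOp ψ p M hM, lagrangeOp, successProb, expVal_add, expVal_sum,
    expVal_sum, ← Finset.sum_add_distrib, ← mul_assoc, mul_comm (p k)]
  congr 1
  refine Finset.sum_congr rfl fun j _ => ?_
  rw [expVal_add, expVal_smul, expVal_smul, expVal_proj_mul φ, ← expVal_proj_mul (ψ j) φ]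
  ring

variable {ψ p M}

theorem posSemidef_lagrangeOp_add_conjTranspose_sub (hM : IsPOVM M)
    (hopt : ∀ N, IsPOVM N → successProb ψ p N ≤ successProb ψ p M) (k : Fin m) :
    (lagrangeOp ψ p M + (lagrangeOp ψ p M)ᴴ - (2 * p k) • proj (ψ k)).PosSemidef := by
  refine ((isHermitian_add_transpose_self _).sub ((isHermitian_proj _).smul (.all _)))
    |>.posSemidef_of_expVal_nonneg fun φ => ?_
  have hc : 0 ≤ expVal 1 φ := PosSemidef.one.re_dotProduct_nonneg φ
  have hfirst := successProb_nonpos_of_isPOVM_add_smul_add_sq_smul hopt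
    (one_div_pos.mpr (by linarith : 0 < expVal 1 φ + 1)) fun ε hε hεδ =>
      isPOVM_add_variations_proj hM k φ hε.le (by
        rw [lt_div_iff₀ (by linarith)] at hεδ
        nlinarith)
  rw [successProb_firstVariation_proj ψ p M (fun j => (hM.1 j).1)] at hfirst
  rw [expVal_sub, expVal_smul]
  linarith

theorem lagrangeOp_add_conjTranspose_mul (hM : IsPOVM M)
    (hopt : ∀ N, IsPOVM N → successProb ψ p N ≤ successProb ψ p M) (k : Fin m) :
    (lagrangeOp ψ p M + (lagrangeOp ψ p M)ᴴ) * M k = (2 * p k) • (proj (ψ k) * M k) := by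
  set L := lagrangeOp ψ p M
  have hsum : ∑ j, (L + Lᴴ - (2 * p j) • proj (ψ j)) * M j = Lᴴ - L := by
    simp only [sub_mul, Finset.sum_sub_distrib, ← Finset.mul_sum, hM.2, mul_one, smul_mul_assoc,
      mul_smul, ← Finset.smul_sum]
    rw [show ∑ j, p j • (proj (ψ j) * M j) = L from rfl, two_smul]
    abel
  have hzero := PosSemidef.mul_eq_zero_of_re_trace_sum_nonpos
    (posSemidef_lagrangeOp_add_conjTranspose_sub hM hopt) hM.1
    (by rw [← trace_sum, hsum, trace_sub, trace_conjTranspose]; simp) k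
  rwa [sub_mul, sub_eq_zero, smul_mul_assoc] at hzero

theorem isHermitian_lagrangeOp (hM : IsPOVM M)
    (hopt : ∀ N, IsPOVM N → successProb ψ p N ≤ successProb ψ p M) :
    (lagrangeOp ψ p M).IsHermitian := by
  set L := lagrangeOp ψ p M
  have h : L + Lᴴ = L + L := calc
    L + Lᴴ = ∑ k, (L + Lᴴ) * M k := by rw [← Finset.mul_sum, hM.2, mul_one]
    _ = ∑ k, (2 * p k) • (proj (ψ k) * M k) :=
      Finset.sum_congr rfl fun k _ => lagrangeOp_add_conjTranspose_mul hM hopt k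
    _ = L + L := by rw [← two_smul ℝ L]; simp only [L, lagrangeOp, Finset.smul_sum, mul_smul]
  exact add_left_cancel h

theorem lagrangeOp_mul (hM : IsPOVM M)
    (hopt : ∀ N, IsPOVM N → successProb ψ p N ≤ successProb ψ p M) (k : Fin m) :
    lagrangeOp ψ p M * M k = p k • (proj (ψ k) * M k) := by
  have h := lagrangeOp_add_conjTranspose_mul hM hopt k
  rw [(isHermitian_lagrangeOp hM hopt).eq, ← two_smul ℝ, mul_smul, smul_mul_assoc] at h
  exact smul_right_injective _ two_ne_zero h

theorem lagrangeOp_mul_mul_self (hM : IsPOVM M)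
    (hopt : ∀ N, IsPOVM N → successProb ψ p N ≤ successProb ψ p M) (k : Fin m) :
    lagrangeOp ψ p M * M k * lagrangeOp ψ p M
      = (p k ^ 2 * expVal (M k) (ψ k)) • proj (ψ k) := by
  have hML : M k * lagrangeOp ψ p M = p k • (M k * proj (ψ k)) := by
    simpa [(hM.1 k).1.eq, (isHermitian_proj _).eq, (isHermitian_lagrangeOp hM hopt).eq]
      using congr($(lagrangeOp_mul hM hopt k)ᴴ)
  rw [lagrangeOp_mul hM hopt k, smul_mul_assoc, mul_assoc, hML, mul_smul_comm, ← mul_assoc,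
    (hM.1 k).1.proj_mul_mul_proj, smul_smul, smul_smul, sq, mul_assoc]

theorem lagrangeOp_mul_self (hM : IsPOVM M)
    (hopt : ∀ N, IsPOVM N → successProb ψ p N ≤ successProb ψ p M) :
    lagrangeOp ψ p M * lagrangeOp ψ p M
      = ∑ ℓ, (p ℓ ^ 2 * expVal (M ℓ) (ψ ℓ)) • proj (ψ ℓ) := by
  rw [← Finset.sum_congr rfl fun k _ => lagrangeOp_mul_mul_self hM hopt k, ← Finset.sum_mul,
    ← Finset.mul_sum, hM.2, mul_one]

theorem posDef_lagrangeOp (hspan : Submodule.span ℂ (Set.range ψ) = ⊤) (hp : ∀ k, 0 < p k)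
    (hM : IsPOVM M) (hopt : ∀ N, IsPOVM N → successProb ψ p N ≤ successProb ψ p M) :
    (lagrangeOp ψ p M).PosDef := by
  refine (isHermitian_lagrangeOp hM hopt).posDef_of_expVal_pos fun x hx => ?_
  obtain ⟨k, hk⟩ := exists_star_dotProduct_ne_zero_of_span_eq_top hspan hx
  have h := (posSemidef_lagrangeOp_add_conjTranspose_sub hM hopt k).re_dotProduct_nonneg x
  change 0 ≤ expVal _ x at h
  rw [(isHermitian_lagrangeOp hM hopt).eq, expVal_sub, expVal_add, expVal_smul, expVal_proj] at h
  nlinarith [hp k, Complex.normSq_pos.mpr hk]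

end Lagrange

theorem belavkin_necessity_general {d m : ℕ}
    (ψ : Fin m → Fin d → ℂ)
    (hspan : Submodule.span ℂ (Set.range ψ) = ⊤)
    (p : Fin m → ℝ) (hp : ∀ k, 0 < p k)
    (M : Fin m → Matrix (Fin d) (Fin d) ℂ) (hM : IsPOVM M)
    (hopt : ∀ N : Fin m → Matrix (Fin d) (Fin d) ℂ, IsPOVM N →
      ∑ k, p k * expVal (N k) (ψ k) ≤ ∑ k, p k * expVal (M k) (ψ k)) :
    ∃ hS : (∑ ℓ, (p ℓ ^ 2 * expVal (M ℓ) (ψ ℓ)) • proj (ψ ℓ)).PosDef,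
      (∀ k, M k = (hS.posSemidef.sqrt)⁻¹ *
          ((p k ^ 2 * expVal (M k) (ψ k)) • proj (ψ k)) * (hS.posSemidef.sqrt)⁻¹)
      ∧ ∀ k, (M k).rank ≤ 1 := by
  set L := lagrangeOp ψ p M
  have hL : L.PosDef := posDef_lagrangeOp hspan hp hM hopt
  have hLdet : IsUnit L.det := (isUnit_iff_isUnit_det L).mp hL.isUnit
  have hLL : L * L = ∑ ℓ, (p ℓ ^ 2 * expVal (M ℓ) (ψ ℓ)) • proj (ψ ℓ) := lagrangeOp_mul_self hM hopt
  have hS : (∑ ℓ, (p ℓ ^ 2 * expVal (M ℓ) (ψ ℓ)) • proj (ψ ℓ)).PosDef := by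
    simpa [← hLL, hL.isHermitian.eq] using
      PosDef.conjTranspose_mul_self L (mulVec_injective_iff_isUnit.mpr hL.isUnit)
  have hsqrt : hS.posSemidef.sqrt = L := hS.posSemidef.sqrt_eq_of_mul_self_eq hL.posSemidef hLL
  have hMk : ∀ k, M k = (hS.posSemidef.sqrt)⁻¹ *
      ((p k ^ 2 * expVal (M k) (ψ k)) • proj (ψ k)) * (hS.posSemidef.sqrt)⁻¹ := fun k => by
    rw [hsqrt, ← lagrangeOp_mul_mul_self hM hopt k, ← mul_assoc _ (L * M k) L,
      mul_nonsing_inv_cancel_right (A := L) _ hLdet, nonsing_inv_mul_cancel_left (A := L) _ hLdet]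
  refine ⟨hS, hMk, fun k => ?_⟩
  rw [hMk k]
  exact (rank_mul_le_left _ _).trans ((rank_mul_le_right _ _).trans (rank_smul_proj_le_one _ _))

/-- necessity direction of Belavkin's theorem: every optimal POVM for a
spanning pure-state ensemble is the Belavkin weighted square-root measurement with weights
`W k = p k ^ 2 * ⟨ψ k, M k ψ k⟩`, and each `M k` has rank at most 1. -/
theorem belavkin_necessity {d m : ℕ}
    (ψ : Fin m → Fin d → ℂ) (hψ : ∀ k, star (ψ k) ⬝ᵥ ψ k = 1)
    (hspan : Submodule.span ℂ (Set.range ψ) = ⊤)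
    (p : Fin m → ℝ) (hp : ∀ k, 0 < p k) (hp1 : ∑ k, p k = 1)
    (M : Fin m → Matrix (Fin d) (Fin d) ℂ) (hM : IsPOVM M)
    (hopt : ∀ N : Fin m → Matrix (Fin d) (Fin d) ℂ, IsPOVM N →
      ∑ k, p k * expVal (N k) (ψ k) ≤ ∑ k, p k * expVal (M k) (ψ k)) :
    ∃ hS : (∑ ℓ, (p ℓ ^ 2 * expVal (M ℓ) (ψ ℓ)) • proj (ψ ℓ)).PosDef,
      (∀ k, M k = (hS.posSemidef.sqrt)⁻¹ *
          ((p k ^ 2 * expVal (M k) (ψ k)) • proj (ψ k)) * (hS.posSemidef.sqrt)⁻¹)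
      ∧ ∀ k, (M k).rank ≤ 1 :=
  belavkin_necessity_general ψ hspan p hp M hM hopt
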